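/- arXiv:2503.07054 — 6 statements merged into one kernel-verified Lean document; each statement's English description precedes it below -/
import Mathlib

section
/- Let N be a metric space and let M be a nonempty compact subset of N such that the set A(M,N) is nonempty. Then reach(M,N) equals the supremum of the set of all real numbers t > 0 such that every point x ∈ N with dist(x,M) < t has a unique foot point in M. (This identifies the medial-axis definition of the reach with Federer's original definition.) -/
open Metric

/-- The set `A(M,N)` of points having at least two distinct foot points on `M`. -/
def setA {N : Type*} [MetricSpace N] (M : Set N) : Set N :=
  {x | ∃ p ∈ M, ∃ p' ∈ M, p ≠ p' ∧ infDist x M = dist x p ∧ infDist x M = dist x p'}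

/-- The medial axis `med(M,N)`: the closure of `A(M,N)`. -/
def medAxis {N : Type*} [MetricSpace N] (M : Set N) : Set N := closure (setA M)

/-- The reach of `M` in `N`: the infimum of distances from points of the medial axis to `M`. -/
noncomputable def reach {N : Type*} [MetricSpace N] (M : Set N) : ℝ :=
  sInf ((fun x => infDist x M) '' medAxis M)

theorem stmt2 {N : Type*} [MetricSpace N] (M : Set N)
    (hMne : M.Nonempty) (hMc : IsCompact M) (hA : (setA M).Nonempty) :
    reach M = sSup {t : ℝ | 0 < t ∧
      ∀ x : N, infDist x M < t → ∃! p, p ∈ M ∧ dist x p = infDist x M} := by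
  set T := {t : ℝ | 0 < t ∧
      ∀ x : N, infDist x M < t → ∃! p, p ∈ M ∧ dist x p = infDist x M} with hT
  have hmed : (medAxis M).Nonempty := hA.mono subset_closure
  have himg : ((fun x => infDist x M) '' medAxis M).Nonempty := hmed.image _
  have hbdd : BddBelow ((fun x => infDist x M) '' medAxis M) := by
    refine ⟨0, ?_⟩
    rintro y ⟨x, -, rfl⟩
    exact infDist_nonneg
  have hr0 : 0 ≤ reach M := by
    apply Real.sInf_nonneg
    rintro y ⟨x, -, rfl⟩
    exact infDist_nonneg
  -- any point with two distinct foot points is on the medial axis, hence far from M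
  have hreach_le : ∀ x ∈ setA M, reach M ≤ infDist x M := by
    intro x hx
    exact csInf_le hbdd ⟨x, subset_closure hx, rfl⟩
  -- key: every t ∈ T satisfies t ≤ reach M
  have key : ∀ t ∈ T, t ≤ reach M := by
    intro t ht
    by_contra h
    push_neg at h
    obtain ⟨y, ⟨x, hx, rfl⟩, hyt⟩ := exists_lt_of_csInf_lt himg h
    -- x ∈ closure (setA M) with infDist x M < t; find x' ∈ setA M with infDist x' M < t
    have hcont : Continuous fun y : N => infDist y M := continuous_infDist_pt M
    have hopen : IsOpen {y : N | infDist y M < t} := isOpen_lt hcont continuous_const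
    obtain ⟨x', hx'lt, hx'A⟩ := _root_.mem_closure_iff.mp hx _ hopen hyt
    obtain ⟨p, hp, p', hp', hne, hdp, hdp'⟩ := hx'A
    obtain ⟨q, -, huniq⟩ := ht.2 x' hx'lt
    have h1 : p = q := huniq p ⟨hp, hdp.symm⟩
    have h2 : p' = q := huniq p' ⟨hp', hdp'.symm⟩
    exact hne (h1.trans h2.symm)
  -- if reach M > 0 then reach M ∈ T
  have hrT : 0 < reach M → reach M ∈ T := by
    intro hr
    refine ⟨hr, fun x hx => ?_⟩
    obtain ⟨p, hp, hpd⟩ := hMc.exists_infDist_eq_dist hMne x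
    refine ⟨p, ⟨hp, hpd.symm⟩, ?_⟩
    rintro q ⟨hq, hqd⟩
    by_contra hne
    have hxA : x ∈ setA M := ⟨q, hq, p, hp, hne, hqd.symm, hpd⟩
    exact absurd hx (not_lt.mpr (hreach_le x hxA))
  refine le_antisymm ?_ (Real.sSup_le key hr0)
  rcases lt_or_ge 0 (reach M) with hr | hr
  · exact le_csSup ⟨reach M, key⟩ (hrT hr)
  · have : reach M = 0 := le_antisymm hr hr0
    rw [this]
    exact Real.sSup_nonneg fun t ht => le_of_lt ht.1
end

section
/- Let N be a metric space, let M be a nonempty compact subset of N, and let q ∈ med(M,N) be a point having a unique foot point p in M. Then for every ε > 0 there exists a point x ∈ A(M,N) with d(x,q) < ε which has two distinct foot points p₁ ≠ p₂ in M satisfying d(p₁,p) < ε and d(p₂,p) < ε. In particular, there are sequences of distinct foot-point pairs of points of A(M,N) converging to q whose foot points both converge to p. -/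
open Metric

theorem stmt4 {N : Type*} [MetricSpace N] (M : Set N)
    (hMne : M.Nonempty) (hMc : IsCompact M)
    (q : N) (hq : q ∈ medAxis M) (p : N) (hp : p ∈ M)
    (hpq : dist q p = infDist q M)
    (huniq : ∀ p' ∈ M, dist q p' = infDist q M → p' = p)
    (ε : ℝ) (hε : 0 < ε) :
    ∃ x ∈ setA M, dist x q < ε ∧
      ∃ p₁ ∈ M, ∃ p₂ ∈ M, p₁ ≠ p₂ ∧
        dist x p₁ = infDist x M ∧ dist x p₂ = infDist x M ∧
        dist p₁ p < ε ∧ dist p₂ p < ε := by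
  set K : Set N := M ∩ {p' | ε ≤ dist p' p} with hKdef
  -- find δ > 0 such that any x with dist x q < δ has all foot points within ε of p
  have hgood : ∃ δ > 0, δ ≤ ε ∧ ∀ x, dist x q < δ →
      ∀ p' ∈ M, dist x p' = infDist x M → dist p' p < ε := by
    rcases Set.eq_empty_or_nonempty K with hKe | hKne
    · refine ⟨ε, hε, le_refl _, fun x _ p' hp' _ => ?_⟩
      by_contra h
      exact Set.eq_empty_iff_forall_notMem.mp hKe p' ⟨hp', not_lt.mp h⟩
    · have hKc : IsCompact K := hMc.inter_right
        (isClosed_le continuous_const ((continuous_id.dist continuous_const)))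
      obtain ⟨p'', hp''K, hp''⟩ := hKc.exists_infDist_eq_dist hKne q
      have hp''M : p'' ∈ M := hp''K.1
      -- infDist q M < infDist q K
      have hlt : infDist q M < infDist q K := by
        rw [hp'']
        rcases lt_or_eq_of_le (infDist_le_dist_of_mem hp''M) with h | h
        · exact h
        · exfalso
          have := huniq p'' hp''M h.symm
          have hεle : ε ≤ dist p'' p := hp''K.2
          rw [this, dist_self] at hεle
          exact absurd hεle (not_le.mpr hε)
      set c : ℝ := (infDist q K - infDist q M) / 2 with hc
      have hcpos : 0 < c := by rw [hc]; linarith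
      refine ⟨min ε c, lt_min hε hcpos, min_le_left _ _, fun x hx p' hp' hfoot => ?_⟩
      by_contra h
      have hp'K : p' ∈ K := ⟨hp', not_lt.mp h⟩
      have h1 : infDist x K ≤ dist x p' := infDist_le_dist_of_mem hp'K
      have h2 : infDist q K ≤ infDist x K + dist q x := infDist_le_infDist_add_dist
      have h3 : infDist x M ≤ infDist q M + dist x q := infDist_le_infDist_add_dist
      have hxc : dist x q < c := lt_of_lt_of_le hx (min_le_right _ _)
      have hqx' : dist q x < c := by rwa [dist_comm]
      have e1 : infDist q K - c < infDist x K := by linarith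
      have e2 : infDist x M < infDist q M + c := by linarith
      rw [hfoot] at h1
      have : infDist q K - infDist q M = 2 * c := by rw [hc]; ring
      linarith
  obtain ⟨δ, hδ0, hδε, hδ⟩ := hgood
  obtain ⟨x, hxA, hxq⟩ := Metric.mem_closure_iff.mp hq δ hδ0
  obtain ⟨p₁, hp₁, p₂, hp₂, hne, hd₁, hd₂⟩ := hxA
  have hqx : dist x q < δ := by rwa [dist_comm] at hxq
  refine ⟨x, ⟨p₁, hp₁, p₂, hp₂, hne, hd₁, hd₂⟩, lt_of_lt_of_le hqx hδε,
    p₁, hp₁, p₂, hp₂, hne, hd₁.symm, hd₂.symm,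
    hδ x hqx p₁ hp₁ hd₁.symm, hδ x hqx p₂ hp₂ hd₂.symm⟩
end

section
/- Let E be a real inner product space, let M be a nonempty subset of E, let p ∈ M and q ∈ E satisfy dist(q,M) = ‖q − p‖ = τ with τ > 0, and set η = (q − p)/τ. Let α : ℝ → E be a curve with values in M, with α(0) = p, twice differentiable at 0, and with ‖α'(0)‖ = 1. Then ⟨η, α''(0)⟩ ≤ 1/τ. -/
open scoped RealInnerProductSpace

/-- Second derivative test: at a global minimum where the first derivative vanishes,
the second derivative is nonnegative. -/
lemma secondDeriv_nonneg_of_min {f : ℝ → ℝ} (hmin : ∀ s, f 0 ≤ f s)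
    (hd1 : ∀ᶠ s in nhds (0 : ℝ), DifferentiableAt ℝ f s)
    (hd0 : deriv f 0 = 0) {c : ℝ} (hc : HasDerivAt (deriv f) c 0) : 0 ≤ c := by
  by_contra hlt
  push_neg at hlt
  have hslope : Filter.Tendsto (slope (deriv f) 0) (nhdsWithin 0 {(0:ℝ)}ᶜ) (nhds c) :=
    hasDerivAt_iff_tendsto_slope.1 hc
  have hneg : ∀ᶠ s in nhdsWithin 0 {(0:ℝ)}ᶜ, slope (deriv f) 0 s < 0 :=
    hslope.eventually_lt_const hlt
  -- extract a δ-neighborhood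
  obtain ⟨δ₁, hδ₁pos, hδ₁⟩ := Metric.eventually_nhds_iff.1 hd1
  have hneg' : ∀ᶠ s in nhds (0:ℝ), s ≠ 0 → slope (deriv f) 0 s < 0 := by
    rwa [eventually_nhdsWithin_iff] at hneg
  obtain ⟨δ₂, hδ₂pos, hδ₂⟩ := Metric.eventually_nhds_iff.1 hneg'
  set ε := min δ₁ δ₂ / 2 with hε
  have hεpos : 0 < ε := by positivity
  have hεlt : ∀ s ∈ Set.Icc (-ε) 0, dist s (0:ℝ) < min δ₁ δ₂ := by
    intro s hs
    rw [Real.dist_eq, sub_zero, abs_lt]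
    constructor
    · nlinarith [hs.1, lt_min hδ₁pos hδ₂pos]
    · nlinarith [hs.2, lt_min hδ₁pos hδ₂pos]
  have hdiff : ∀ s ∈ Set.Icc (-ε) 0, DifferentiableAt ℝ f s := by
    intro s hs
    exact hδ₁ (lt_of_lt_of_le (hεlt s hs) (min_le_left _ _))
  have hderivpos : ∀ s ∈ Set.Ioo (-ε) (0:ℝ), 0 < deriv f s := by
    intro s hs
    have hsne : s ≠ 0 := ne_of_lt hs.2
    have := hδ₂ (lt_of_lt_of_le (hεlt s ⟨le_of_lt hs.1, le_of_lt hs.2⟩) (min_le_right _ _)) hsne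
    rw [slope_def_field, hd0, sub_zero, sub_zero, div_neg_iff] at this
    rcases this with ⟨h1, h2⟩ | ⟨h1, h2⟩
    · linarith
    · linarith [hs.2]
  have hmono : StrictMonoOn f (Set.Icc (-ε) 0) := by
    apply strictMonoOn_of_deriv_pos (convex_Icc _ _)
    · exact fun s hs => (hdiff s hs).continuousAt.continuousWithinAt
    · intro s hs
      rw [interior_Icc] at hs
      exact hderivpos s hs
  have h1 : f (-ε) < f 0 :=
    hmono ⟨le_refl _, by linarith⟩ ⟨by linarith, le_refl _⟩ (by linarith)
  exact absurd (hmin (-ε)) (not_le.2 h1)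

theorem stmt6 {E : Type*} [NormedAddCommGroup E] [InnerProductSpace ℝ E]
    (M : Set E) (hMne : M.Nonempty) (p : E) (hp : p ∈ M) (q : E)
    (τ : ℝ) (hτ : 0 < τ)
    (hdist : Metric.infDist q M = ‖q - p‖) (hτeq : ‖q - p‖ = τ)
    (α : ℝ → E) (hαM : ∀ s, α s ∈ M) (hα0 : α 0 = p)
    (hd1 : ∀ᶠ s in nhds (0 : ℝ), DifferentiableAt ℝ α s)
    (hd2 : DifferentiableAt ℝ (deriv α) 0)
    (hunit : ‖deriv α 0‖ = 1) :
    ⟪τ⁻¹ • (q - p), deriv (deriv α) 0⟫ ≤ 1 / τ := by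
  set f : ℝ → ℝ := fun s => ‖q - α s‖ ^ 2 with hf
  have hmin : ∀ s, f 0 ≤ f s := by
    intro s
    have h1 : Metric.infDist q M ≤ ‖q - α s‖ := by
      have := Metric.infDist_le_dist_of_mem (x := q) (hαM s)
      rwa [dist_eq_norm] at this
    have h0 : (0:ℝ) ≤ Metric.infDist q M := Metric.infDist_nonneg
    simp only [hf, hα0]
    rw [← hdist]
    exact pow_le_pow_left₀ h0 h1 2
  have hfd : ∀ᶠ s in nhds (0:ℝ), HasDerivAt f (2 * ⟪q - α s, -(deriv α s)⟫) s := by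
    filter_upwards [hd1] with s hs
    exact (((hasDerivAt_const s q).sub hs.hasDerivAt).norm_sq).congr_deriv (by
      rw [zero_sub]; rfl)
  have hderiv_eq : deriv f =ᶠ[nhds (0:ℝ)] fun s => 2 * ⟪q - α s, -(deriv α s)⟫ :=
    hfd.mono fun s h => h.deriv
  have hd0 : deriv f 0 = 0 := by
    have hlm : IsLocalMin f 0 := Filter.Eventually.of_forall hmin
    exact hlm.deriv_eq_zero
  -- derivative of deriv f at 0
  have hα0' : DifferentiableAt ℝ α 0 := hd1.self_of_nhds
  have hinner : HasDerivAt (fun s => 2 * ⟪q - α s, -(deriv α s)⟫)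
      (2 * (⟪q - α 0, -(deriv (deriv α) 0)⟫ + ⟪-(deriv α 0), -(deriv α 0)⟫)) 0 := by
    have h1 : HasDerivAt (fun s => q - α s) (-(deriv α 0)) 0 := by
      have := (hasDerivAt_const (0:ℝ) q).sub hα0'.hasDerivAt
      rw [zero_sub] at this
      exact this
    have h2 : HasDerivAt (fun s => -(deriv α s)) (-(deriv (deriv α) 0)) 0 :=
      hd2.hasDerivAt.neg
    exact (h1.inner ℝ h2).const_mul 2
  have hc : HasDerivAt (deriv f)
      (2 * (⟪q - α 0, -(deriv (deriv α) 0)⟫ + ⟪-(deriv α 0), -(deriv α 0)⟫)) 0 :=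
    hinner.congr_of_eventuallyEq hderiv_eq
  have hge := secondDeriv_nonneg_of_min hmin (hfd.mono fun s h => h.differentiableAt) hd0 hc
  have hnn : ⟪-(deriv α 0), -(deriv α 0)⟫ = (1:ℝ) := by
    rw [inner_neg_neg, real_inner_self_eq_norm_sq, hunit]; norm_num
  rw [hα0, hnn, inner_neg_right] at hge
  have hkey : ⟪q - p, deriv (deriv α) 0⟫ ≤ 1 := by linarith
  rw [real_inner_smul_left, one_div]
  calc τ⁻¹ * ⟪q - p, deriv (deriv α) 0⟫ ≤ τ⁻¹ * 1 := by
        exact mul_le_mul_of_nonneg_left hkey (by positivity)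
    _ = τ⁻¹ := mul_one _
end

section
/- Let E be a real inner product space, let M be a nonempty subset of E, let q ∈ E, and let p, p' ∈ M be distinct points with dist(q,M) = ‖q − p‖ = ‖q − p'‖ = τ, where τ > 0. Let b > 0, ε > 0, and let α : (−ε, b+ε) → E be a twice continuously differentiable curve with values in M such that α(0) = p and α(b) = p'. Then the function L(s) = ‖q − α(s)‖ is twice continuously differentiable on (−ε, b+ε) and there exists s₀ ∈ [0, b] with L''(s₀) = 0. -/
theorem stmt8 {E : Type*} [NormedAddCommGroup E] [InnerProductSpace ℝ E]
    (M : Set E) (hMne : M.Nonempty) (q p p' : E) (hp : p ∈ M) (hp' : p' ∈ M)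
    (hne : p ≠ p') (τ : ℝ) (hτ : 0 < τ)
    (hd : Metric.infDist q M = ‖q - p‖) (h1 : ‖q - p‖ = τ) (h2 : ‖q - p'‖ = τ)
    (b ε : ℝ) (hb : 0 < b) (hε : 0 < ε)
    (α : ℝ → E) (hα : ContDiffOn ℝ 2 α (Set.Ioo (-ε) (b + ε)))
    (hαM : ∀ s ∈ Set.Ioo (-ε) (b + ε), α s ∈ M)
    (hα0 : α 0 = p) (hαb : α b = p') :
    ContDiffOn ℝ 2 (fun s => ‖q - α s‖) (Set.Ioo (-ε) (b + ε)) ∧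
      ∃ s₀ ∈ Set.Icc 0 b, deriv (deriv (fun s => ‖q - α s‖)) s₀ = 0 := by
  set I := Set.Ioo (-ε) (b + ε) with hI
  have hIopen : IsOpen I := isOpen_Ioo
  -- lower bound on L
  have hlow : ∀ s ∈ I, τ ≤ ‖q - α s‖ := by
    intro s hs
    have := Metric.infDist_le_dist_of_mem (x := q) (hαM s hs)
    rw [hd, h1, dist_eq_norm] at this
    exact this
  have hmemI : ∀ s ∈ Set.Icc (0:ℝ) b, s ∈ I := by
    intro s hs
    exact ⟨lt_of_lt_of_le (neg_lt_zero.2 hε) hs.1, lt_of_le_of_lt hs.2 (lt_add_of_pos_right b hε)⟩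
  have h0I : (0:ℝ) ∈ I := hmemI 0 ⟨le_refl _, hb.le⟩
  have hbI : b ∈ I := hmemI b ⟨hb.le, le_refl _⟩
  have hne0 : ∀ s ∈ I, q - α s ≠ 0 := by
    intro s hs h
    have := hlow s hs
    rw [h, norm_zero] at this
    exact absurd this (not_le.2 hτ)
  -- smoothness
  have hL : ContDiffOn ℝ 2 (fun s => ‖q - α s‖) I := by
    intro s hs
    exact ((contDiffOn_const.sub hα) s hs).norm ℝ (hne0 s hs)
  refine ⟨hL, ?_⟩
  set L : ℝ → ℝ := fun s => ‖q - α s‖ with hLdef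
  -- local minima at 0 and b
  have hmin0 : IsLocalMin L 0 := by
    filter_upwards [hIopen.mem_nhds h0I] with s hs
    have := hlow s hs
    simpa [hLdef, hα0, h1] using this
  have hminb : IsLocalMin L b := by
    filter_upwards [hIopen.mem_nhds hbI] with s hs
    have := hlow s hs
    simpa [hLdef, hαb, h2] using this
  have hd0 : deriv L 0 = 0 := hmin0.deriv_eq_zero
  have hdb : deriv L b = 0 := hminb.deriv_eq_zero
  -- deriv L is continuous on I
  have hDL : ContinuousOn (deriv L) I :=
    hL.continuousOn_deriv_of_isOpen hIopen (by norm_num)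
  have hcont : ContinuousOn (deriv L) (Set.Icc 0 b) :=
    hDL.mono fun s hs => hmemI s hs
  obtain ⟨c, hc, hcz⟩ := exists_deriv_eq_zero hb hcont (hd0.trans hdb.symm)
  exact ⟨c, ⟨hc.1.le, hc.2.le⟩, hcz⟩
end

section
/- Let E be a real inner product space, let M be a nonempty subset of E, let q ∈ E, and let p, p' ∈ M be distinct points with dist(q,M) = ‖q − p‖ = ‖q − p'‖ = τ, where τ > 0. Let b > 0, ε > 0, and let α : (−ε, b+ε) → E be a twice continuously differentiable unit-speed curve (‖α'(s)‖ = 1 for all s) with values in M such that α(0) = p and α(b) = p'. Then there exists s₀ ∈ [0, b] such that ⟨α''(s₀), q − α(s₀)⟩ = 1 − ⟨α'(s₀), q − α(s₀)⟩² / ‖q − α(s₀)‖². -/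
open scoped RealInnerProductSpace

/-- Derivative of the norm of a curve at a point where it is nonzero. -/
lemma hasDerivAt_norm_aux {E : Type*} [NormedAddCommGroup E] [InnerProductSpace ℝ E]
    {f : ℝ → E} {f' : E} {x : ℝ} (hf : HasDerivAt f f' x) (h0 : f x ≠ 0) :
    HasDerivAt (fun t => ‖f t‖) (⟪f', f x⟫ / ‖f x‖) x := by
  have hinner : HasDerivAt (fun t => ⟪f t, f t⟫) (⟪f x, f'⟫ + ⟪f', f x⟫) x :=
    hf.inner ℝ hf
  have hne : ⟪f x, f x⟫ ≠ (0:ℝ) := inner_self_ne_zero.2 h0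
  have h := hinner.sqrt hne
  have hkey : ∀ y : E, Real.sqrt ⟪y, y⟫ = ‖y‖ := by
    intro y
    rw [real_inner_self_eq_norm_sq, Real.sqrt_sq (norm_nonneg y)]
  have heq : (fun t => Real.sqrt ⟪f t, f t⟫) = fun t => ‖f t‖ := by
    funext t; exact hkey (f t)
  rw [heq] at h
  convert h using 1
  rw [hkey (f x), real_inner_comm (f x) f']
  have hn : ‖f x‖ ≠ 0 := norm_ne_zero_iff.2 h0
  field_simp
  ring

theorem stmt9 {E : Type*} [NormedAddCommGroup E] [InnerProductSpace ℝ E]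
    (M : Set E) (hMne : M.Nonempty) (q p p' : E) (hp : p ∈ M) (hp' : p' ∈ M)
    (hne : p ≠ p') (τ : ℝ) (hτ : 0 < τ)
    (hd : Metric.infDist q M = ‖q - p‖) (h1 : ‖q - p‖ = τ) (h2 : ‖q - p'‖ = τ)
    (b ε : ℝ) (hb : 0 < b) (hε : 0 < ε)
    (α : ℝ → E) (hα : ContDiffOn ℝ 2 α (Set.Ioo (-ε) (b + ε)))
    (hunit : ∀ s ∈ Set.Ioo (-ε) (b + ε), ‖deriv α s‖ = 1)
    (hαM : ∀ s ∈ Set.Ioo (-ε) (b + ε), α s ∈ M)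
    (hα0 : α 0 = p) (hαb : α b = p') :
    ∃ s₀ ∈ Set.Icc 0 b,
      ⟪deriv (deriv α) s₀, q - α s₀⟫ =
        1 - ⟪deriv α s₀, q - α s₀⟫ ^ 2 / ‖q - α s₀‖ ^ 2 := by
  set I : Set ℝ := Set.Ioo (-ε) (b + ε) with hIdef
  have hIopen : IsOpen I := isOpen_Ioo
  have hsub : Set.Icc 0 b ⊆ I := by
    intro s hs
    exact ⟨lt_of_lt_of_le (neg_lt_zero.2 hε) hs.1, lt_of_le_of_lt hs.2 (lt_add_of_pos_right b hε)⟩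
  -- the distance to q is at least τ on the curve
  have hge : ∀ s ∈ I, τ ≤ ‖q - α s‖ := by
    intro s hs
    calc τ = Metric.infDist q M := by rw [hd, h1]
    _ ≤ dist q (α s) := Metric.infDist_le_dist_of_mem (hαM s hs)
    _ = ‖q - α s‖ := dist_eq_norm q (α s)
  have hpos : ∀ s ∈ I, (0:ℝ) < ‖q - α s‖ := fun s hs => lt_of_lt_of_le hτ (hge s hs)
  have hne0 : ∀ s ∈ I, q - α s ≠ 0 := by
    intro s hs
    exact fun h => by simpa [h] using hpos s hs
  -- differentiability
  have hdiff : DifferentiableOn ℝ α I := hα.differentiableOn (by norm_num)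
  have hA : ∀ s ∈ I, HasDerivAt α (deriv α s) s := by
    intro s hs
    exact ((hdiff s hs).differentiableAt (hIopen.mem_nhds hs)).hasDerivAt
  have hα1 : ContDiffOn ℝ 1 (deriv α) I := by
    have := hα.deriv_of_isOpen hIopen (m := 1) (by norm_num)
    exact this
  have hV : ∀ s ∈ I, HasDerivAt (deriv α) (deriv (deriv α) s) s := by
    intro s hs
    exact (((hα1.differentiableOn (by norm_num)) s hs).differentiableAt
      (hIopen.mem_nhds hs)).hasDerivAt
  have hU : ∀ s ∈ I, HasDerivAt (fun t => q - α t) (-(deriv α s)) s := by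
    intro s hs
    exact (hA s hs).const_sub q
  -- the function F and its derivative
  set F : ℝ → ℝ := fun s => ⟪deriv α s, q - α s⟫ / ‖q - α s‖ with hFdef
  set F' : ℝ → ℝ := fun s =>
    ((⟪deriv α s, -(deriv α s)⟫ + ⟪deriv (deriv α) s, q - α s⟫) * ‖q - α s‖ -
      ⟪deriv α s, q - α s⟫ * (⟪-(deriv α s), q - α s⟫ / ‖q - α s‖)) / ‖q - α s‖ ^ 2
    with hF'def
  have hFderiv : ∀ s ∈ I, HasDerivAt F (F' s) s := by
    intro s hs
    have hnum : HasDerivAt (fun t => ⟪deriv α t, q - α t⟫)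
        (⟪deriv α s, -(deriv α s)⟫ + ⟪deriv (deriv α) s, q - α s⟫) s :=
      (hV s hs).inner ℝ (hU s hs)
    have hden : HasDerivAt (fun t => ‖q - α t‖)
        (⟪-(deriv α s), q - α s⟫ / ‖q - α s‖) s :=
      hasDerivAt_norm_aux (hU s hs) (hne0 s hs)
    exact hnum.div hden (ne_of_gt (hpos s hs))
  -- F vanishes at the endpoints since the distance has local minima there
  have hend : ∀ s₁ ∈ I, ‖q - α s₁‖ = τ → F s₁ = 0 := by
    intro s₁ hs₁ hval
    have hmin : IsLocalMin (fun t => ‖q - α t‖) s₁ := by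
      apply Filter.eventually_of_mem (hIopen.mem_nhds hs₁)
      intro t ht
      simp only [hval]
      exact hge t ht
    have hder : HasDerivAt (fun t => ‖q - α t‖)
        (⟪-(deriv α s₁), q - α s₁⟫ / ‖q - α s₁‖) s₁ :=
      hasDerivAt_norm_aux (hU s₁ hs₁) (hne0 s₁ hs₁)
    have hz := hmin.hasDerivAt_eq_zero hder
    have hnz : ‖q - α s₁‖ ≠ 0 := ne_of_gt (hpos s₁ hs₁)
    field_simp at hz
    rw [mul_zero, inner_neg_left, neg_eq_zero] at hz
    simp only [hFdef, hz, zero_div]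
  have h0I : (0:ℝ) ∈ I := hsub ⟨le_refl 0, le_of_lt hb⟩
  have hbI : b ∈ I := hsub ⟨le_of_lt hb, le_refl b⟩
  have hF0 : F 0 = 0 := hend 0 h0I (by rw [hα0, h1])
  have hFb : F b = 0 := hend b hbI (by rw [hαb, h2])
  -- continuity of F on [0, b]
  have hcont : ContinuousOn F (Set.Icc 0 b) := by
    have hc1 : ContinuousOn (deriv α) I := hα1.continuousOn
    have hc2 : ContinuousOn (fun t => q - α t) I :=
      continuousOn_const.sub hα.continuousOn
    have hc3 : ContinuousOn (fun t => ⟪deriv α t, q - α t⟫ : ℝ → ℝ) I := hc1.inner hc2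
    have hc4 : ContinuousOn (fun t => ‖q - α t‖) I := hc2.norm
    exact (hc3.div hc4 (fun s hs => ne_of_gt (hpos s hs))).mono hsub
  -- Rolle
  obtain ⟨c, hc, hFc⟩ := exists_hasDerivAt_eq_zero hb hcont (hF0.trans hFb.symm)
    (fun x hx => hFderiv x (hsub (Set.mem_Icc_of_Ioo hx)))
  have hcI : c ∈ I := hsub (Set.mem_Icc_of_Ioo hc)
  refine ⟨c, Set.mem_Icc_of_Ioo hc, ?_⟩
  -- unpack F' c = 0
  have hvv : ⟪deriv α c, deriv α c⟫ = (1:ℝ) := by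
    rw [real_inner_self_eq_norm_sq, hunit c hcI]; norm_num
  have hn : (0:ℝ) < ‖q - α c‖ := hpos c hcI
  have hnne : ‖q - α c‖ ≠ 0 := ne_of_gt hn
  simp only [hF'def, inner_neg_left, inner_neg_right] at hFc
  rw [hvv] at hFc
  set A : ℝ := ⟪deriv (deriv α) c, q - α c⟫
  set B : ℝ := ⟪deriv α c, q - α c⟫
  set n : ℝ := ‖q - α c‖
  field_simp at hFc ⊢
  nlinarith [hFc, sq_nonneg n, hn]
end

section
/- Let E be a real inner product space, let M be a nonempty subset of E, let p ∈ M and q ∈ E satisfy dist(q,M) = ‖q − p‖ = τ with τ > 0. Let α : ℝ → E be a curve with values in M, with α(0) = p, twice differentiable at 0, with ‖α'(0)‖ = 1, and suppose that the function L(s) = ‖q − α(s)‖ has vanishing second derivative at s = 0. Then ⟨α''(0), q − p⟩ = 1. -/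
open scoped RealInnerProductSpace

theorem stmt11 {E : Type*} [NormedAddCommGroup E] [InnerProductSpace ℝ E]
    (M : Set E) (hMne : M.Nonempty) (p : E) (hp : p ∈ M) (q : E)
    (τ : ℝ) (hτ : 0 < τ)
    (hdist : Metric.infDist q M = ‖q - p‖) (hτeq : ‖q - p‖ = τ)
    (α : ℝ → E) (hαM : ∀ s, α s ∈ M) (hα0 : α 0 = p)
    (hd1 : ∀ᶠ s in nhds (0 : ℝ), DifferentiableAt ℝ α s)
    (hd2 : DifferentiableAt ℝ (deriv α) 0)
    (hunit : ‖deriv α 0‖ = 1)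
    (hL : deriv (deriv (fun s => ‖q - α s‖)) 0 = 0) :
    ⟪deriv (deriv α) 0, q - p⟫ = 1 := by
  set v := deriv α 0 with hv
  set a := deriv (deriv α) 0 with ha
  set f : ℝ → ℝ := fun s => ⟪q - α s, q - α s⟫ with hf
  set N : ℝ → ℝ := fun s => -2 * ⟪deriv α s, q - α s⟫ with hNdef
  have hα0d : DifferentiableAt ℝ α 0 := hd1.self_of_nhds
  -- f s = ‖q - α s‖ ^ 2 and values at 0
  have hfval : ∀ s, f s = ‖q - α s‖ ^ 2 := fun s => real_inner_self_eq_norm_sq _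
  have hf0 : f 0 = τ ^ 2 := by rw [hfval, hα0, hτeq]
  have hLeq : (fun s => ‖q - α s‖) = fun s => Real.sqrt (f s) := by
    funext s
    rw [hfval, Real.sqrt_sq (norm_nonneg _)]
  -- derivative of f where α is differentiable
  have hfder : ∀ s, DifferentiableAt ℝ α s → HasDerivAt f (N s) s := by
    intro s hs
    have h1 : HasDerivAt (fun t => q - α t) (-(deriv α s)) s :=
      (hs.hasDerivAt).const_sub q
    have := (h1.inner ℝ h1 : HasDerivAt f (⟪q - α s, -(deriv α s)⟫ + ⟪-(deriv α s), q - α s⟫) s)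
    refine this.congr_deriv ?_
    rw [inner_neg_left, inner_neg_right, real_inner_comm]
    ring
  -- f is eventually positive
  have hcont : ContinuousAt f 0 := by
    have : DifferentiableAt ℝ f 0 := (hα0d.const_sub q).inner ℝ (hα0d.const_sub q)
    exact this.continuousAt
  have hfpos : ∀ᶠ s in nhds (0 : ℝ), 0 < f s := by
    have : Set.Ioi (0:ℝ) ∈ nhds (f 0) := Ioi_mem_nhds (by rw [hf0]; positivity)
    exact hcont this
  -- eventual derivative of L
  set D : ℝ → ℝ := fun s => 2 * Real.sqrt (f s) with hDdef
  set Lder : ℝ → ℝ := fun s => 1 / D s * N s with hLderdef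
  have hLd : ∀ s, DifferentiableAt ℝ α s → 0 < f s →
      HasDerivAt (fun t => ‖q - α t‖) (Lder s) s := by
    intro s hs hpos
    rw [hLeq]
    have := (Real.hasDerivAt_sqrt (ne_of_gt hpos)).comp s (hfder s hs)
    exact this
  have hev : ∀ᶠ s in nhds (0 : ℝ), deriv (fun t => ‖q - α t‖) s = Lder s := by
    filter_upwards [hd1, hfpos] with s hs hpos
    exact (hLd s hs hpos).deriv
  -- L has a local min at 0, so Lder 0 = 0, giving N 0 = 0
  have hsq0 : Real.sqrt (f 0) = τ := by rw [hf0, Real.sqrt_sq hτ.le]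
  have hmin : IsLocalMin (fun t => ‖q - α t‖) 0 := by
    apply Filter.Eventually.of_forall
    intro s
    have h1 : Metric.infDist q M ≤ dist q (α s) := Metric.infDist_le_dist_of_mem (hαM s)
    simp only [hα0, dist_eq_norm] at *
    linarith [h1.trans_eq rfl, hdist.symm.le]
  have hN0 : N 0 = 0 := by
    have hd0 : HasDerivAt (fun t => ‖q - α t‖) (Lder 0) 0 :=
      hLd 0 hα0d (by rw [hf0]; positivity)
    have := hmin.hasDerivAt_eq_zero hd0
    have hD0 : D 0 = 2 * τ := by rw [hDdef]; simp [hsq0]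
    rw [hLderdef] at this
    simp only [hD0] at this
    have h2τ : (2 * τ) ≠ 0 := by positivity
    field_simp at this
    simpa using this
  -- derivative of N at 0
  set N' : ℝ → ℝ := fun s => s with hN'
  have hNder : HasDerivAt N (-2 * (⟪a, q - p⟫ - 1)) 0 := by
    have h1 : HasDerivAt (fun t => q - α t) (-v) 0 := (hα0d.hasDerivAt).const_sub q
    have h2 : HasDerivAt (deriv α) a 0 := hd2.hasDerivAt
    have h3 := (h2.inner ℝ h1 :
      HasDerivAt (fun t => ⟪deriv α t, q - α t⟫) (⟪deriv α 0, -v⟫ + ⟪a, q - α 0⟫) 0)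
    have h4 := h3.const_mul (-2 : ℝ)
    refine h4.congr_deriv ?_
    rw [hα0, inner_neg_right, real_inner_self_eq_norm_sq, hunit]
    ring
  -- derivative of D at 0
  have hDder : HasDerivAt D 0 0 := by
    have h1 := (Real.hasDerivAt_sqrt (by rw [hf0]; positivity : f 0 ≠ 0)).comp 0
      (hfder 0 hα0d)
    have h2 := h1.const_mul (2 : ℝ)
    have : 2 * (1 / (2 * Real.sqrt (f 0)) * N 0) = 0 := by rw [hN0]; ring
    rw [this] at h2
    simpa [D, Function.comp] using h2
  -- derivative of Lder at 0
  have hD0 : D 0 = 2 * τ := by rw [hDdef]; simp [hsq0]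
  have hD0ne : D 0 ≠ 0 := by rw [hD0]; positivity
  have hLderder : HasDerivAt Lder ((-2 * (⟪a, q - p⟫ - 1)) / (2 * τ)) 0 := by
    have := hNder.div hDder hD0ne
    have heq : (fun s => N s / D s) = Lder := by
      funext s; rw [hLderdef]; ring
    rw [show (N / D) = (fun s => N s / D s) from rfl, heq] at this
    refine this.congr_deriv ?_
    rw [hN0, hD0]
    field_simp
    ring
  -- conclude
  have hkey : deriv (deriv (fun s => ‖q - α s‖)) 0 = (-2 * (⟪a, q - p⟫ - 1)) / (2 * τ) := by
    have : deriv (fun s => ‖q - α s‖) =ᶠ[nhds (0:ℝ)] Lder := hev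
    rw [this.deriv_eq]
    exact hLderder.deriv
  rw [hkey] at hL
  have h2τ : (2 * τ) ≠ 0 := by positivity
  field_simp at hL
  linarith
end
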